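/- If there exists a unitary U_AB = Σ_i |i⟩⟨i|_A ⊗ U^B_i such that U^B_i ρ^B_{ij} (U^B_j)† = |ρ^B_{ij}| for all i, j, then the max-relative entropy of IQ coherence equals log(1 + C^{A|B}_{l1}(ρ_AB)). In particular, this equality holds for every bipartite pure state. -/

import Mathlib

open scoped BigOperators ComplexOrder Kronecker

/-- The square root of a positive semidefinite matrix, as `Matrix.PosSemidef.sqrt` was defined
in the older Mathlib (since removed): `U * diagonal (√λ) * U⋆` for the eigendecomposition. -/
noncomputable def posSemidefSqrtOld {n : Type*} [Fintype n] [DecidableEq n] {P : Matrix n n ℂ}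
    (hP : P.PosSemidef) : Matrix n n ℂ :=
  (hP.1.eigenvectorUnitary : Matrix n n ℂ) *
    Matrix.diagonal ((↑) ∘ (√·) ∘ hP.1.eigenvalues) *
    (star hP.1.eigenvectorUnitary : Matrix n n ℂ)

/-- Trace norm: `‖P‖_tr = Tr √(Pᴴ P)`. -/
noncomputable def traceNorm {n : Type*} [Fintype n] [DecidableEq n] (P : Matrix n n ℂ) : ℝ :=
  ((posSemidefSqrtOld (Matrix.posSemidef_conjTranspose_mul_self P)).trace).re

/-- The B-blocks of an operator on H_A ⊗ H_B. -/
def blockB {A B : Type*} (Q : Matrix (A × B) (A × B) ℂ) (i j : A) : Matrix B B ℂ :=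
  fun b b' => Q (i, b) (j, b')

/-- l1 norm of IQ coherence: C^{A|B}_{l1}(ρ) = Σ_{i≠j} ‖ρ^B_{ij}‖_tr. -/
noncomputable def CIQl1 {A B : Type*} [Fintype A] [Fintype B] [DecidableEq A] [DecidableEq B]
    (ρ : Matrix (A × B) (A × B) ℂ) : ℝ :=
  ∑ i, ∑ j, if i = j then 0 else traceNorm (blockB ρ i j)

/-- The set of incoherent-quantum (IQ) states: convex combinations
Σ_k p_k σ^A_k ⊗ τ^B_k with each σ^A_k an incoherent (diagonal) state on A and
each τ^B_k a state on B. -/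
def IQstates (A B : Type*) [Fintype A] [Fintype B] [DecidableEq A] [DecidableEq B] :
    Set (Matrix (A × B) (A × B) ℂ) :=
  { σ | ∃ (k : ℕ) (w : Fin k → ℝ) (sA : Fin k → Matrix A A ℂ) (tB : Fin k → Matrix B B ℂ),
      (∀ m, 0 ≤ w m) ∧ (∑ m, w m = 1) ∧
      (∀ m, (sA m).PosSemidef ∧ (sA m).trace = 1 ∧ ∀ i j, i ≠ j → sA m i j = 0) ∧
      (∀ m, (tB m).PosSemidef ∧ (tB m).trace = 1) ∧
      σ = ∑ m, (w m : ℂ) • (sA m ⊗ₖ tB m) }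

/-- Max-relative entropy of IQ coherence:
C^{A|B}_max(ρ) = log₂ min {λ : ρ ≤ λσ for some σ ∈ IQ}. -/
noncomputable def CmaxIQ {A B : Type*} [Fintype A] [Fintype B] [DecidableEq A] [DecidableEq B]
    (ρ : Matrix (A × B) (A × B) ℂ) : ℝ :=
  Real.logb 2 (sInf {l : ℝ | ∃ σ ∈ IQstates A B, ((l : ℂ) • σ - ρ).PosSemidef})

/-!
Put `P i j = U i * ρ_ij * (U j)ᴴ`. Since these blocks are positive, `‖ρ_ij‖_tr = tr P i j`,
so `∑ i j, tr P i j = 1 + C_l1(ρ)`.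

Lower bound: if `ρ ≤ l • σ` with `σ` IQ, apply the positive functional
`X ↦ ∑ i j, tr (U i * X_ij * (U j)ᴴ)`, which is `d_A ⟨+| tr_B (U X U†) |+⟩`. It equals `1` on
IQ states, whose off-diagonal blocks vanish, and `1 + C_l1(ρ)` on `ρ`.

Upper bound: with `λ = 1 + C_l1(ρ)`, the block-diagonal state
`σ = λ⁻¹ ⊕ᵢ (U i)ᴴ (∑ j, P i j) (U i)` is IQ. Moreover `λσ - ρ` is congruent to the block
Laplacian `diag (∑ j, P i j) - (P i j)`, which is positive because its quadratic form is
`½ ∑ i j, (uᵢ - uⱼ)† P i j (uᵢ - uⱼ)`.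

For a pure state `ψ`, take unitaries that rotate each block `ψᵢ` onto `‖ψᵢ‖ e` for one fixed
unit vector `e`. Then `P i j = ‖ψᵢ‖ ‖ψⱼ‖ e e†` is positive.
-/

open Matrix

section TraceNorm

open scoped MatrixOrder

variable {n : Type*} [Fintype n]

theorem Matrix.PosSemidef.ofReal_re_trace {M : Matrix n n ℂ} (hM : M.PosSemidef) :
    ((M.trace.re : ℝ) : ℂ) = M.trace :=
  (Complex.eq_re_of_ofReal_le hM.trace_nonneg).symm

variable [DecidableEq n]

theorem posSemidefSqrtOld_eq_sqrt {P : Matrix n n ℂ} (hP : P.PosSemidef) :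
    posSemidefSqrtOld hP = CFC.sqrt P := by
  rw [CFC.sqrt_eq_cfc, cfc_nnreal_eq_real _ P, hP.1.cfc_eq]
  simp only [IsHermitian.cfc, posSemidefSqrtOld, Unitary.conjStarAlgAut_apply]
  congr 3
  funext i
  simp [hP.eigenvalues_nonneg i]

theorem posSemidef_posSemidefSqrtOld {P : Matrix n n ℂ} (hP : P.PosSemidef) :
    (posSemidefSqrtOld hP).PosSemidef := by
  rw [posSemidefSqrtOld_eq_sqrt]
  exact nonneg_iff_posSemidef.mp (CFC.sqrt_nonneg P)

theorem eq_posSemidefSqrtOld_of_mul_self_eq {Q P : Matrix n n ℂ} (hQ : Q.PosSemidef)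
    (hP : P.PosSemidef) (h : Q * Q = P) : Q = posSemidefSqrtOld hP := by
  rw [posSemidefSqrtOld_eq_sqrt, eq_comm, CFC.sqrt_eq_iff P Q hP.nonneg hQ.nonneg, h]

theorem traceNorm_eq_re_trace_of_posSemidef {M U V : Matrix n n ℂ}
    (hU : U ∈ unitaryGroup n ℂ) (hV : V ∈ unitaryGroup n ℂ) (hP : (U * M * Vᴴ).PosSemidef) :
    traceNorm M = (U * M * Vᴴ).trace.re := by
  set P := U * M * Vᴴ
  have hUU : Uᴴ * U = 1 := mem_unitaryGroup_iff'.mp hU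
  have hUU' : U * Uᴴ = 1 := mem_unitaryGroup_iff.mp hU
  have hVV : Vᴴ * V = 1 := mem_unitaryGroup_iff'.mp hV
  have hVV' : V * Vᴴ = 1 := mem_unitaryGroup_iff.mp hV
  have hM : M = Uᴴ * P * V := by
    simp only [P, ← Matrix.mul_assoc, hUU, Matrix.one_mul]
    rw [Matrix.mul_assoc, hVV, Matrix.mul_one]
  have hsq : (Vᴴ * P * V) * (Vᴴ * P * V) = Mᴴ * M := by
    conv_rhs => rw [hM]
    simp only [conjTranspose_mul, conjTranspose_conjTranspose, hP.1.eq, Matrix.mul_assoc]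
    rw [← Matrix.mul_assoc V, hVV', Matrix.one_mul, ← Matrix.mul_assoc U, hUU', Matrix.one_mul]
  rw [traceNorm, ← eq_posSemidefSqrtOld_of_mul_self_eq (hP.conjTranspose_mul_mul_same V) _ hsq,
    trace_mul_cycle, hVV', Matrix.one_mul]

end TraceNorm

theorem CIQl1_nonneg {A B : Type*} [Fintype A] [Fintype B] [DecidableEq A] [DecidableEq B]
    (ρ : Matrix (A × B) (A × B) ℂ) : 0 ≤ CIQl1 ρ :=
  Finset.sum_nonneg fun i _ => Finset.sum_nonneg fun j _ => by
    split_ifs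
    · exact le_rfl
    · exact (Complex.le_def.mp (posSemidef_posSemidefSqrtOld _).trace_nonneg).1

section Unitary

variable {n R : Type*} [Fintype n] [CommRing R] [StarRing R]

theorem dotProduct_conjTranspose_mul_mul_mulVec (V M W : Matrix n n R) (x y : n → R) :
    star x ⬝ᵥ (Vᴴ * M * W) *ᵥ y = star (V *ᵥ x) ⬝ᵥ M *ᵥ (W *ᵥ y) := by
  simp only [star_mulVec, dotProduct_mulVec, ← vecMul_vecMul]

theorem mul_vecMulVec_star_mul_conjTranspose {m : Type*} (M N : Matrix m n R) (a b : n → R) :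
    M * vecMulVec a (star b) * Nᴴ = vecMulVec (M *ᵥ a) (star (N *ᵥ b)) := by
  rw [mul_vecMulVec, vecMulVec_mul, star_mulVec]

variable [DecidableEq n]

theorem trace_mul_mul_conjTranspose_of_mem_unitaryGroup {U : Matrix n n R}
    (hU : U ∈ unitaryGroup n R) (M : Matrix n n R) : (U * M * Uᴴ).trace = M.trace := by
  have hUU : Uᴴ * U = 1 := mem_unitaryGroup_iff'.mp hU
  rw [trace_mul_cycle, hUU, Matrix.one_mul]

end Unitary

theorem exists_mem_unitaryGroup_mulVec_eq_smul_single {n : Type*} [Fintype n] [DecidableEq n]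
    (v : n → ℂ) (b : n) :
    ∃ W ∈ unitaryGroup n ℂ, ∃ r : ℝ, 0 ≤ r ∧ W *ᵥ v = (r : ℂ) • Pi.single b 1 := by
  by_cases hv : v = 0
  · exact ⟨1, one_mem _, 0, le_rfl, by simp [hv]⟩
  set x : EuclideanSpace ℂ n := WithLp.toLp 2 v
  have hx : ‖x‖ ≠ 0 := by simpa [x] using hv
  have hunit : Orthonormal ℂ (({b} : Set n).domRestrict fun _ => (‖x‖⁻¹ : ℂ) • x) :=
    orthonormal_subsingleton_iff.mpr fun _ => by
      rw [Set.domRestrict_apply, norm_smul, norm_inv, Complex.norm_real, norm_norm,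
        inv_mul_cancel₀ hx]
  obtain ⟨e, he⟩ := hunit.exists_orthonormalBasis_extension_of_card_eq finrank_euclideanSpace
  set M := (EuclideanSpace.basisFun n ℂ).toBasis.toMatrix e
  have hM : M ∈ unitaryGroup n ℂ :=
    (EuclideanSpace.basisFun n ℂ).toMatrix_orthonormalBasis_mem_unitary e
  have hMb : M *ᵥ Pi.single b 1 = (‖x‖⁻¹ : ℂ) • v := by
    ext c
    simp [M, mulVec_single, Module.Basis.toMatrix_apply, he b rfl, x]
  refine ⟨star M, Unitary.star_mem hM, ‖x‖, norm_nonneg _, ?_⟩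
  have hv' : v = (‖x‖ : ℂ) • (M *ᵥ Pi.single b 1) := by
    rw [hMb, smul_smul, mul_inv_cancel₀ (by exact_mod_cast hx), one_smul]
  rw [hv', mulVec_smul, mulVec_mulVec, mem_unitaryGroup_iff'.mp hM, one_mulVec]

theorem posSemidef_single_self {n : Type*} [DecidableEq n] (b : n) :
    (single b b (1 : ℂ)).PosSemidef :=
  diagonal_single b (1 : ℂ) ▸ PosSemidef.diagonal (Pi.single_nonneg.mpr zero_le_one)

theorem Matrix.PosSemidef.exists_eq_smul_trace_one {n : Type*} [Fintype n] [DecidableEq n]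
    [Nonempty n] {D : Matrix n n ℂ} (hD : D.PosSemidef) :
    ∃ τ : Matrix n n ℂ, (τ.PosSemidef ∧ τ.trace = 1) ∧ D = (D.trace.re : ℂ) • τ := by
  by_cases h : D.trace = 0
  · let b : n := Classical.arbitrary n
    refine ⟨single b b 1, ⟨posSemidef_single_self b, trace_single_eq_same b 1⟩, ?_⟩
    simp [hD.trace_eq_zero_iff.mp h]
  · have htD := hD.ofReal_re_trace
    set t := D.trace.re
    have ht : t ≠ 0 := by rwa [← Complex.ofReal_ne_zero, htD]
    refine ⟨((t⁻¹ : ℝ) : ℂ) • D,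
      ⟨hD.smul (Complex.zero_le_real.mpr (inv_nonneg.mpr (Complex.le_def.mp hD.trace_nonneg).1)),
        ?_⟩, ?_⟩
    · rw [trace_smul, ← htD, smul_eq_mul, ← Complex.ofReal_mul, inv_mul_cancel₀ ht,
        Complex.ofReal_one]
    · rw [smul_smul, ← Complex.ofReal_mul, mul_inv_cancel₀ ht, Complex.ofReal_one, one_smul]

section Blocks

variable {A B : Type*}

theorem conjTranspose_blockB (Q : Matrix (A × B) (A × B) ℂ) (i j : A) :
    (blockB Q i j)ᴴ = blockB Qᴴ j i :=
  rfl

theorem blockB_vecMulVec_star (x y : A × B → ℂ) (i j : A) :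
    blockB (vecMulVec x (star y)) i j =
      vecMulVec (Function.curry x i) (star (Function.curry y j)) :=
  rfl

theorem blockB_sum_single_kronecker [Fintype A] [DecidableEq A] (D : A → Matrix B B ℂ)
    (i j : A) : blockB (∑ k, single k k 1 ⊗ₖ D k) i j = if i = j then D i else 0 := by
  ext b b'
  split_ifs with h <;> simp [blockB, Matrix.sum_apply, single_apply, ite_and, h]

variable [Fintype A] [Fintype B]

theorem trace_eq_sum_trace_blockB (Q : Matrix (A × B) (A × B) ℂ) :
    Q.trace = ∑ i, (blockB Q i i).trace := by
  simp [trace, blockB, Fintype.sum_prod_type]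

theorem dotProduct_mulVec_eq_sum_blockB (Q : Matrix (A × B) (A × B) ℂ) (x y : A × B → ℂ) :
    star x ⬝ᵥ Q *ᵥ y =
      ∑ i, ∑ j, star (Function.curry x i) ⬝ᵥ blockB Q i j *ᵥ Function.curry y j := by
  simp only [dotProduct, mulVec, blockB, Pi.star_apply, Function.curry_apply,
    Fintype.sum_prod_type, Finset.mul_sum]
  exact Finset.sum_congr rfl fun i _ => Finset.sum_comm

/-- `blockRow U = √d_A (⟨+| ⊗ 1) U_AB` for `U_AB = ∑ i, |i⟩⟨i| ⊗ U i`. -/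
def blockRow (U : A → Matrix B B ℂ) : Matrix B (A × B) ℂ :=
  Matrix.of fun b p => U p.1 b p.2

theorem blockRow_mul_mul_conjTranspose (U : A → Matrix B B ℂ) (Q : Matrix (A × B) (A × B) ℂ) :
    blockRow U * Q * (blockRow U)ᴴ = ∑ i, ∑ j, U i * blockB Q i j * (U j)ᴴ := by
  ext b b'
  simp only [blockRow, mul_apply, Matrix.sum_apply, conjTranspose_apply, of_apply,
    Fintype.sum_prod_type, Finset.sum_mul]
  exact (Finset.sum_congr rfl fun _ _ => Finset.sum_comm).trans Finset.sum_comm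

theorem sum_dotProduct_mulVec_sub_nonneg {P : A → A → Matrix B B ℂ}
    (hP : ∀ i j, (P i j).PosSemidef) (hsymm : ∀ i j, P j i = P i j) (u : A → B → ℂ) :
    0 ≤ ∑ i, ∑ j, (star (u i) ⬝ᵥ P i j *ᵥ u i - star (u i) ⬝ᵥ P i j *ᵥ u j) := by
  have hswap : ∀ v w : A → A → B → ℂ,
      ∑ i, ∑ j, star (v i j) ⬝ᵥ P i j *ᵥ w i j = ∑ i, ∑ j, star (v j i) ⬝ᵥ P i j *ᵥ w j i := by
    intro v w
    rw [Finset.sum_comm]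
    simp only [hsymm]
  have key : ∑ i, ∑ j, (star (u i) ⬝ᵥ P i j *ᵥ u i - star (u i) ⬝ᵥ P i j *ᵥ u j) =
      2⁻¹ * ∑ i, ∑ j, star (u i - u j) ⬝ᵥ P i j *ᵥ (u i - u j) := by
    simp only [star_sub, mulVec_sub, sub_dotProduct, dotProduct_sub, Finset.sum_sub_distrib]
    rw [hswap (fun i _ => u i) (fun i _ => u i), hswap (fun i _ => u i) (fun _ j => u j)]
    ring
  rw [key]
  exact mul_nonneg (inv_nonneg.mpr zero_le_two) <| Finset.sum_nonneg fun i _ =>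
    Finset.sum_nonneg fun j _ => (hP i j).dotProduct_mulVec_nonneg _

theorem posSemidef_sum_single_kronecker_sub [DecidableEq A] {ρ : Matrix (A × B) (A × B) ℂ}
    {U : A → Matrix B B ℂ} {P : A → A → Matrix B B ℂ}
    (hP : ∀ i j, (P i j).PosSemidef) (hsymm : ∀ i j, P j i = P i j) (hρ : ρ.IsHermitian)
    (hρP : ∀ i j, blockB ρ i j = (U i)ᴴ * P i j * U j) :
    (∑ i, single i i 1 ⊗ₖ ((U i)ᴴ * (∑ j, P i j) * U i) - ρ).PosSemidef := by
  refine PosSemidef.of_dotProduct_mulVec_nonneg ((posSemidef_sum _ fun i _ =>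
    (posSemidef_single_self i).kronecker
      ((posSemidef_sum _ fun j _ => hP i j).conjTranspose_mul_mul_same _)).isHermitian.sub hρ)
    fun x => ?_
  set u := fun i => U i *ᵥ Function.curry x i
  have hdiag : ∀ i, ∑ j, star (Function.curry x i) ⬝ᵥ
      (if i = j then (U i)ᴴ * (∑ k, P i k) * U i else 0) *ᵥ Function.curry x j =
      ∑ j, star (u i) ⬝ᵥ P i j *ᵥ u i := by
    intro i
    rw [Finset.sum_eq_single i (fun j _ hj => by simp [Ne.symm hj]) (by simp), if_pos rfl,
      dotProduct_conjTranspose_mul_mul_mulVec, sum_mulVec, dotProduct_sum]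
  rw [sub_mulVec, dotProduct_sub, dotProduct_mulVec_eq_sum_blockB,
    dotProduct_mulVec_eq_sum_blockB]
  simp only [blockB_sum_single_kronecker, hdiag, hρP, dotProduct_conjTranspose_mul_mul_mulVec,
    ← Finset.sum_sub_distrib]
  exact sum_dotProduct_mulVec_sub_nonneg hP hsymm u

end Blocks

section IQ

variable {A B : Type*} [Fintype A] [Fintype B] [DecidableEq A] [DecidableEq B]

theorem blockB_eq_zero_of_mem_IQstates {σ : Matrix (A × B) (A × B) ℂ} (hσ : σ ∈ IQstates A B)
    {i j : A} (hij : i ≠ j) : blockB σ i j = 0 := by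
  obtain ⟨k, w, sA, tB, -, -, hsA, -, rfl⟩ := hσ
  ext b b'
  simp [blockB, Matrix.sum_apply, (hsA _).2.2 i j hij]

theorem trace_eq_one_of_mem_IQstates {σ : Matrix (A × B) (A × B) ℂ} (hσ : σ ∈ IQstates A B) :
    σ.trace = 1 := by
  obtain ⟨k, w, sA, tB, -, hw, hsA, htB, rfl⟩ := hσ
  simp only [trace_sum, trace_smul, trace_kronecker, (hsA _).2.1, (htB _).2, mul_one,
    smul_eq_mul]
  exact_mod_cast hw

theorem sum_single_kronecker_mem_IQstates (D : A → Matrix B B ℂ) (hD : ∀ i, (D i).PosSemidef)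
    (htr : ∑ i, (D i).trace = 1) : ∑ i, single i i 1 ⊗ₖ D i ∈ IQstates A B := by
  have : Nonempty B := by
    by_contra hB
    simp [trace, not_nonempty_iff.mp hB] at htr
  choose τ hτ hDτ using fun i => (hD i).exists_eq_smul_trace_one
  let e := (Fintype.equivFin A).symm
  refine ⟨Fintype.card A, fun m => (D (e m)).trace.re, fun m => single (e m) (e m) 1,
    fun m => τ (e m), fun m => (Complex.le_def.mp (hD _).trace_nonneg).1, ?_,
    fun m => ⟨posSemidef_single_self _, trace_single_eq_same _ 1, fun i j hij => ?_⟩,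
    fun m => hτ _, ?_⟩
  · rw [e.sum_comp (fun i => (D i).trace.re), ← Complex.re_sum, htr, Complex.one_re]
  · simp only [single_apply, ite_eq_right_iff, and_imp]
    rintro rfl rfl
    exact absurd rfl hij
  · refine (e.sum_comp _).symm.trans (Finset.sum_congr rfl fun m _ => ?_)
    rw [← kronecker_smul, ← hDτ]

theorem trace_blockRow_conj_eq_one_of_mem_IQstates {U : A → Matrix B B ℂ}
    (hU : ∀ i, U i ∈ unitaryGroup B ℂ) {σ : Matrix (A × B) (A × B) ℂ} (hσ : σ ∈ IQstates A B) :
    (blockRow U * σ * (blockRow U)ᴴ).trace = 1 := by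
  have hblock : ∀ i j, (U i * blockB σ i j * (U j)ᴴ).trace =
      if i = j then (blockB σ i i).trace else 0 := by
    intro i j
    split_ifs with h
    · subst h
      exact trace_mul_mul_conjTranspose_of_mem_unitaryGroup (hU i) _
    · simp [blockB_eq_zero_of_mem_IQstates hσ h]
  simp only [blockRow_mul_mul_conjTranspose, trace_sum, hblock, Finset.sum_ite_eq,
    Finset.mem_univ, if_true]
  rw [← trace_eq_sum_trace_blockB, trace_eq_one_of_mem_IQstates hσ]

end IQ

section Bounds

variable {A B : Type*} [Fintype A] [Fintype B] [DecidableEq A] [DecidableEq B]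
  {ρ : Matrix (A × B) (A × B) ℂ} {U : A → Matrix B B ℂ}

theorem trace_blockRow_conj_eq_one_add_CIQl1 (htr : ρ.trace = 1) (hU : ∀ i, U i ∈ unitaryGroup B ℂ)
    (hP : ∀ i j, (U i * blockB ρ i j * (U j)ᴴ).PosSemidef) :
    (blockRow U * ρ * (blockRow U)ᴴ).trace = ((1 + CIQl1 ρ : ℝ) : ℂ) := by
  have hterm : ∀ i j, (U i * blockB ρ i j * (U j)ᴴ).trace =
      (if i = j then (blockB ρ i i).trace else 0) +
        ((if i = j then 0 else traceNorm (blockB ρ i j) : ℝ) : ℂ) := by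
    intro i j
    split_ifs with h
    · subst h
      rw [trace_mul_mul_conjTranspose_of_mem_unitaryGroup (hU i), Complex.ofReal_zero, add_zero]
    · rw [traceNorm_eq_re_trace_of_posSemidef (hU i) (hU j) (hP i j), (hP i j).ofReal_re_trace,
        zero_add]
  simp only [blockRow_mul_mul_conjTranspose, trace_sum, hterm, Finset.sum_add_distrib,
    Finset.sum_ite_eq, Finset.mem_univ, if_true]
  rw [← trace_eq_sum_trace_blockB, htr, CIQl1]
  push_cast
  rfl

theorem one_add_CIQl1_le_of_smul_sub_posSemidef (htr : ρ.trace = 1)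
    (hU : ∀ i, U i ∈ unitaryGroup B ℂ) (hP : ∀ i j, (U i * blockB ρ i j * (U j)ᴴ).PosSemidef)
    {σ : Matrix (A × B) (A × B) ℂ} {l : ℝ} (hσ : σ ∈ IQstates A B)
    (hl : ((l : ℂ) • σ - ρ).PosSemidef) : 1 + CIQl1 ρ ≤ l := by
  have h := (hl.mul_mul_conjTranspose_same (blockRow U)).trace_nonneg
  rwa [Matrix.mul_sub, Matrix.sub_mul, trace_sub, Matrix.mul_smul, Matrix.smul_mul, trace_smul,
    trace_blockRow_conj_eq_one_of_mem_IQstates hU hσ,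
    trace_blockRow_conj_eq_one_add_CIQl1 htr hU hP, smul_eq_mul, mul_one, sub_nonneg,
    Complex.real_le_real] at h

theorem exists_mem_IQstates_smul_sub_posSemidef (hρ : ρ.IsHermitian) (htr : ρ.trace = 1)
    (hU : ∀ i, U i ∈ unitaryGroup B ℂ) (hP : ∀ i j, (U i * blockB ρ i j * (U j)ᴴ).PosSemidef) :
    ∃ σ ∈ IQstates A B, (((1 + CIQl1 ρ : ℝ) : ℂ) • σ - ρ).PosSemidef := by
  have hUU : ∀ i, (U i)ᴴ * U i = 1 := fun i => mem_unitaryGroup_iff'.mp (hU i)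
  have hUU' : ∀ i, U i * (U i)ᴴ = 1 := fun i => mem_unitaryGroup_iff.mp (hU i)
  have hsymm : ∀ i j, U j * blockB ρ j i * (U i)ᴴ = U i * blockB ρ i j * (U j)ᴴ := by
    intro i j
    rw [← (hP i j).1.eq]
    simp only [conjTranspose_mul, conjTranspose_conjTranspose, Matrix.mul_assoc]
    rw [conjTranspose_blockB, hρ.eq]
  have hρP : ∀ i j, blockB ρ i j = (U i)ᴴ * (U i * blockB ρ i j * (U j)ᴴ) * U j := by
    intro i j
    simp only [← Matrix.mul_assoc, hUU, Matrix.one_mul]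
    rw [Matrix.mul_assoc, hUU, Matrix.mul_one]
  have hlam : 0 < 1 + CIQl1 ρ := by have := CIQl1_nonneg ρ; positivity
  set D := fun i => (U i)ᴴ * (∑ j, U i * blockB ρ i j * (U j)ᴴ) * U i
  have hDtr : ∑ i, (D i).trace = ((1 + CIQl1 ρ : ℝ) : ℂ) := by
    rw [← trace_blockRow_conj_eq_one_add_CIQl1 htr hU hP, blockRow_mul_mul_conjTranspose, trace_sum]
    simp only [D, trace_mul_cycle _ _ (U _), hUU', Matrix.one_mul, trace_sum]
  refine ⟨∑ i, single i i 1 ⊗ₖ ((((1 + CIQl1 ρ)⁻¹ : ℝ) : ℂ) • D i), ?_, ?_⟩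
  · refine sum_single_kronecker_mem_IQstates _
      (fun i => ((posSemidef_sum _ fun j _ => hP i j).conjTranspose_mul_mul_same _).smul
        (Complex.zero_le_real.mpr (inv_nonneg.mpr hlam.le))) ?_
    simp only [trace_smul, smul_eq_mul, ← Finset.mul_sum, hDtr, ← Complex.ofReal_mul,
      inv_mul_cancel₀ hlam.ne', Complex.ofReal_one]
  · simp only [Finset.smul_sum, kronecker_smul, smul_smul, ← Complex.ofReal_mul,
      mul_inv_cancel₀ hlam.ne', Complex.ofReal_one, one_smul]
    exact posSemidef_sum_single_kronecker_sub hP hsymm hρ hρP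

theorem CmaxIQ_eq_logb_of_posSemidef_conj_blockB (hρ : ρ.IsHermitian) (htr : ρ.trace = 1)
    (hU : ∀ i, U i ∈ unitaryGroup B ℂ) (hP : ∀ i j, (U i * blockB ρ i j * (U j)ᴴ).PosSemidef) :
    CmaxIQ ρ = Real.logb 2 (1 + CIQl1 ρ) := by
  have hleast : IsLeast {l : ℝ | ∃ σ ∈ IQstates A B, ((l : ℂ) • σ - ρ).PosSemidef}
      (1 + CIQl1 ρ) := by
    refine ⟨exists_mem_IQstates_smul_sub_posSemidef hρ htr hU hP, ?_⟩
    rintro l ⟨σ, hσ, hl⟩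
    exact one_add_CIQl1_le_of_smul_sub_posSemidef htr hU hP hσ hl
  rw [CmaxIQ, hleast.csInf_eq]

theorem CmaxIQ_vecMulVec_eq_logb (ψ : A × B → ℂ) (hψ : ∑ x, Complex.normSq (ψ x) = 1) :
    CmaxIQ (vecMulVec ψ (star ψ)) = Real.logb 2 (1 + CIQl1 (vecMulVec ψ (star ψ))) := by
  have htr : (vecMulVec ψ (star ψ)).trace = 1 := by
    simp only [trace_vecMulVec, dotProduct, Pi.star_apply, Complex.star_def, Complex.mul_conj]
    exact_mod_cast hψ
  obtain ⟨⟨-, b⟩⟩ : Nonempty (A × B) := by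
    by_contra h
    simp [not_nonempty_iff.mp h] at hψ
  choose W hW r hr hWψ using fun i =>
    exists_mem_unitaryGroup_mulVec_eq_smul_single (Function.curry ψ i) b
  refine CmaxIQ_eq_logb_of_posSemidef_conj_blockB (posSemidef_vecMulVec_self_star ψ).1 htr hW
    fun i j => ?_
  have hblock : W i * blockB (vecMulVec ψ (star ψ)) i j * (W j)ᴴ =
      ((r i * r j : ℝ) : ℂ) • vecMulVec (Pi.single b 1) (star (Pi.single b 1)) := by
    rw [blockB_vecMulVec_star, mul_vecMulVec_star_mul_conjTranspose, hWψ, hWψ,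
      star_smul, Complex.star_def, Complex.conj_ofReal, smul_vecMulVec, vecMulVec_smul, smul_smul,
      Complex.ofReal_mul]
  rw [hblock]
  exact (posSemidef_vecMulVec_self_star _).smul
    (Complex.zero_le_real.mpr (mul_nonneg (hr i) (hr j)))

end Bounds

/-- if there is a unitary U_AB = Σ_i |i⟩⟨i| ⊗ U^B_i with
U^B_i ρ^B_{ij} (U^B_j)† = |ρ^B_{ij}| for all i, j, then
C^{A|B}_max(ρ) = log₂(1 + C^{A|B}_{l1}(ρ)); in particular this equality holds for
every bipartite pure state. -/
theorem CmaxIQ_eq_log_CIQl1 {A B : Type*} [Fintype A] [Fintype B] [DecidableEq A]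
    [DecidableEq B] :
    (∀ (ρ : Matrix (A × B) (A × B) ℂ), ρ.PosSemidef → ρ.trace = 1 →
      ∀ U : A → Matrix B B ℂ, (∀ i, U i ∈ Matrix.unitaryGroup B ℂ) →
      (∀ i j, U i * blockB ρ i j * (U j).conjTranspose =
        posSemidefSqrtOld (Matrix.posSemidef_conjTranspose_mul_self (blockB ρ i j))) →
      CmaxIQ ρ = Real.logb 2 (1 + CIQl1 ρ)) ∧
    (∀ ψ : A × B → ℂ, (∑ x, Complex.normSq (ψ x)) = 1 →
      CmaxIQ (Matrix.vecMulVec ψ (star ψ)) =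
        Real.logb 2 (1 + CIQl1 (Matrix.vecMulVec ψ (star ψ)))) :=
  ⟨fun _ hρ htr _ hU hsqrt => CmaxIQ_eq_logb_of_posSemidef_conj_blockB hρ.1 htr hU
      fun i j => hsqrt i j ▸ posSemidef_posSemidefSqrtOld _,
    CmaxIQ_vecMulVec_eq_logb⟩
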